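/- Let I be an independent set of G containing exactly one vertex of each part P_i. In the graph G' of the partitioned-TS-to-partitioned-TJ construction, every partitioned TJ-step starting from g(I) moves the token on v^b, where {v} = I ∩ P_i for some i, to a δ-vertex δ_e with e an edge of G[P_i]; in particular, no token on a vertex v^a or on a vertex w^b can jump to another a-vertex or b-vertex. -/
import Mathlib


/-- `I` is an independent set of the graph `G`. -/
def IsIndepFinset {α : Type*} (G : SimpleGraph α) (I : Finset α) : Prop :=
  ∀ u ∈ I, ∀ v ∈ I, ¬ G.Adj u v

/-- `D` is a dominating set of the graph `G`. -/
def IsDomFinset {α : Type*} (G : SimpleGraph α) (D : Finset α) : Prop :=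
  ∀ x : α, x ∈ D ∨ ∃ y ∈ D, G.Adj x y

/-- A token-jumping step: some token jumps from `u ∈ I` to `w ∉ I`. -/
def TJStep {α : Type*} [DecidableEq α] (I J : Finset α) : Prop :=
  ∃ u ∈ I, ∃ w, w ∉ I ∧ J = insert w (I.erase u)

/-- A token-sliding step: some token slides from `u ∈ I` along an edge to `w ∉ I`. -/
def TSStep {α : Type*} [DecidableEq α] (G : SimpleGraph α) (I J : Finset α) : Prop :=
  ∃ u ∈ I, ∃ w, w ∉ I ∧ G.Adj u w ∧ J = insert w (I.erase u)

/-- A partitioned token-jumping step with respect to token sets `Q`. -/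
def PTJStep {α : Type*} {ι : Type*} [DecidableEq α] (Q : ι → Set α) (I J : Finset α) : Prop :=
  ∃ u ∈ I, ∃ w, w ∉ I ∧ (∃ i, u ∈ Q i ∧ w ∈ Q i) ∧ J = insert w (I.erase u)

/-- A partitioned token-sliding step with respect to token sets `Q`. -/
def PTSStep {α : Type*} {ι : Type*} [DecidableEq α] (G : SimpleGraph α) (Q : ι → Set α)
    (I J : Finset α) : Prop :=
  ∃ u ∈ I, ∃ w, w ∉ I ∧ G.Adj u w ∧ (∃ i, u ∈ Q i ∧ w ∈ Q i) ∧ J = insert w (I.erase u)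

/-- There is a reconfiguration sequence `A = f 0, f 1, …, f ℓ = B` of length `ℓ`, all of whose
members satisfy `Valid`, with consecutive members related by `Step`. -/
def AdmitsSeq {α : Type*} (Valid : Finset α → Prop) (Step : Finset α → Finset α → Prop)
    (A B : Finset α) (ℓ : ℕ) : Prop :=
  ∃ f : ℕ → Finset α, f 0 = A ∧ f ℓ = B ∧ (∀ i, i ≤ ℓ → Valid (f i)) ∧
    ∀ i, i < ℓ → Step (f i) (f (i + 1))

/-- The edges of the induced subgraphs `G[P_i]`, indexing the `δ`-vertices. -/
abbrev PartEdge {V : Type*} (G : SimpleGraph V) {k : ℕ} (P : Fin k → Finset V) : Type _ :=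
  {e : Sym2 V // e ∈ G.edgeSet ∧ ∃ i, ∀ x ∈ e, x ∈ P i}

/-- Vertices of the graph `G'` of the partitioned-TS-to-partitioned-TJ construction. -/
inductive GVtwo (V : Type*) (Ed : Type*) : Type _ where
  | a : V → GVtwo V Ed
  | b : V → GVtwo V Ed
  | de : Ed → GVtwo V Ed
deriving DecidableEq

/-- The edges of `G'`. -/
def relTwo {V : Type*} (G : SimpleGraph V) {k : ℕ} (P : Fin k → Finset V) :
    GVtwo V (PartEdge G P) → GVtwo V (PartEdge G P) → Prop
  | .a v, .b w => v ≠ w ∧ ∃ i, v ∈ P i ∧ w ∈ P i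
  | .a v, .a w => G.Adj v w
  | .de e, .b v => v ∈ e.val
  | .de _, .de _ => True
  | _, _ => False

/-- The graph `G'` of the partitioned-TS-to-partitioned-TJ construction. -/
def GpTwo {V : Type*} (G : SimpleGraph V) {k : ℕ} (P : Fin k → Finset V) :
    SimpleGraph (GVtwo V (PartEdge G P)) :=
  SimpleGraph.fromRel (relTwo G P)

/-- The token sets `A_1,…,A_k` (indexed by `Sum.inl i`) and `B_1,…,B_k` (indexed by
`Sum.inr i`) of `G'`. -/
def QTwo {V : Type*} (G : SimpleGraph V) {k : ℕ} (P : Fin k → Finset V) :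
    Fin k ⊕ Fin k → Set (GVtwo V (PartEdge G P))
  | .inl i => {z | ∃ v ∈ P i, z = GVtwo.a v}
  | .inr i => {z | (∃ v ∈ P i, z = GVtwo.b v) ∨
      ∃ e : PartEdge G P, (∀ x ∈ e.val, x ∈ P i) ∧ z = GVtwo.de e}

/-- The map `g`. -/
def gTwo {V : Type*} [DecidableEq V] (G : SimpleGraph V) {k : ℕ} (P : Fin k → Finset V)
    (I : Finset V) : Finset (GVtwo V (PartEdge G P)) :=
  I.image GVtwo.a ∪ I.image GVtwo.b

/-- every partitioned TJ-step (between independent sets) starting from `g(I)`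
moves the token on `v^b`, where `v` is the unique vertex of `I ∩ P_i` for some `i`, to a
`δ`-vertex `δ_e` with `e` an edge of `G[P_i]`. -/
theorem stmt11 {V : Type*} [Fintype V] [DecidableEq V] (G : SimpleGraph V) (k : ℕ)
    (P : Fin k → Finset V) (hP : ∀ v : V, ∃! i, v ∈ P i)
    (I : Finset V) (hI : IsIndepFinset G I) (hone : ∀ i, ∃! v, v ∈ I ∧ v ∈ P i)
    (J : Finset (GVtwo V (PartEdge G P)))
    (hstep : PTJStep (QTwo G P) (gTwo G P I) J)
    (hJ : IsIndepFinset (GpTwo G P) J) :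
    ∃ (i : Fin k) (v : V) (e : PartEdge G P), v ∈ I ∧ v ∈ P i ∧
      (∀ x ∈ e.val, x ∈ P i) ∧
      J = insert (GVtwo.de e) ((gTwo G P I).erase (GVtwo.b v)) := by
  obtain ⟨u, hu, w, hw, ⟨q, huq, hwq⟩, hJeq⟩ := hstep
  have hmemA : ∀ v : V, GVtwo.a v ∈ gTwo G P I ↔ v ∈ I := by
    intro v; simp [gTwo]
  have hmemB : ∀ v : V, GVtwo.b v ∈ gTwo G P I ↔ v ∈ I := by
    intro v; simp [gTwo]
  match q with
  | .inl i =>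
    obtain ⟨v, hvP, rfl⟩ := huq
    obtain ⟨x, hxP, rfl⟩ := hwq
    have hvI : v ∈ I := (hmemA v).1 hu
    have hxI : x ∉ I := fun h => hw ((hmemA x).2 h)
    have hbv : GVtwo.b v ∈ J := by
      rw [hJeq]
      exact Finset.mem_insert_of_mem (Finset.mem_erase.2 ⟨by simp, (hmemB v).2 hvI⟩)
    have hax : GVtwo.a x ∈ J := by rw [hJeq]; exact Finset.mem_insert_self _ _
    exact absurd (by
      rw [GpTwo, SimpleGraph.fromRel_adj]
      exact ⟨by simp, Or.inl ⟨fun h => hxI (h ▸ hvI), i, hxP, hvP⟩⟩)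
      (hJ _ hax _ hbv)
  | .inr i =>
    have huB : ∃ v, v ∈ P i ∧ u = GVtwo.b v := by
      rcases huq with ⟨v, hvP, rfl⟩ | ⟨e, _, rfl⟩
      · exact ⟨v, hvP, rfl⟩
      · exfalso; revert hu; simp [gTwo]
    obtain ⟨v, hvP, rfl⟩ := huB
    have hvI : v ∈ I := (hmemB v).1 hu
    rcases hwq with ⟨x, hxP, rfl⟩ | ⟨e, he, rfl⟩
    · have hxI : x ∉ I := fun h => hw ((hmemB x).2 h)
      have hav : GVtwo.a v ∈ J := by
        rw [hJeq]
        exact Finset.mem_insert_of_mem (Finset.mem_erase.2 ⟨by simp, (hmemA v).2 hvI⟩)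
      have hbx : GVtwo.b x ∈ J := by rw [hJeq]; exact Finset.mem_insert_self _ _
      exact absurd (by
        rw [GpTwo, SimpleGraph.fromRel_adj]
        exact ⟨by simp, Or.inl ⟨fun h => hxI (h ▸ hvI), i, hvP, hxP⟩⟩)
        (hJ _ hav _ hbx)
    · exact ⟨i, v, e, hvI, hvP, he, hJeq⟩
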